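/- Let m ≥ 1 be an integer. Consider the Φ(3,1) dynamics with initial carrier Z* = (1,0), starting from the configuration Y^0_0 = (m,1) and Y^0_i = (0,0) for i ≥ 1. Then: for every t with 0 ≤ t ≤ m, the configuration at time t is Y^t_0 = (m−t, 1), Y^t_1 = (t, 0), and Y^t_i = (0,0) for i ≥ 2; and at time m+1 it is Y^{m+1}_0 = (0,0), Y^{m+1}_1 = (m,1), and Y^{m+1}_i = (0,0) for i ≥ 2. Moreover at every one of these time steps the carriers satisfy Z_i = (1,0) for all i ≥ 3. In particular, (m,1) is a one-soliton of Φ(3,1) of minimal length one with velocity 1/(m+1). -/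

import Mathlib

/-- The one-vertex step map of `Φ(3,1)`: `S(Z,Y) = (Y′,Z′)` with
`Y′ = (Z₂ + Y₁ − min(Z₁,Y₁), min(Z₁,Y₁))` and `Z′ = (Z₁ + Z₂ − min(Z₁,Y₁), Y₂)`. -/
def S31 (ZY : (ℤ × ℤ) × (ℤ × ℤ)) : (ℤ × ℤ) × (ℤ × ℤ) :=
  ((ZY.1.2 + ZY.2.1 - min ZY.1.1 ZY.2.1, min ZY.1.1 ZY.2.1),
   (ZY.1.1 + ZY.1.2 - min ZY.1.1 ZY.2.1, ZY.2.2))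

/-- The carriers produced while performing one time step of the `Φ(3,1)` dynamics
on a configuration `Y`, starting from the initial carrier `Z* = (1,0)`:
`Z₀ = (1,0)`, `Z_{i+1} = (S(Z_i, Y_i)).2`. -/
def carriers31 (Y : ℕ → ℤ × ℤ) : ℕ → ℤ × ℤ
  | 0 => (1, 0)
  | i + 1 => (S31 (carriers31 Y i, Y i)).2

/-- The time evolution of the `Φ(3,1)` dynamics with initial carrier `(1,0)`:
`config31 Y0 t` is the configuration of states at time `t`. -/
def config31 (Y0 : ℕ → ℤ × ℤ) : ℕ → ℕ → ℤ × ℤ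
  | 0 => Y0
  | t + 1 => fun i => (S31 (carriers31 (config31 Y0 t) i, config31 Y0 t i)).1

/-
The vacuum state `(0,0)` read by the vacuum carrier `(1,0)` is left unchanged, so once a
carrier `(1,0)` is reached after the support of a configuration, nothing further changes. On the
two-site configuration `((a,1), (b,0))` with `a ≥ 1` the carrier drops one unit from site `0` onto
site `1`, giving `((a-1,1), (b+1,0))`; after `m` such steps the configuration `((0,1), (m,0))` is
turned into `((0,0), (m,1))`, i.e. the soliton has moved by one site in `m + 1` time steps.
-/

def step31 (Y : ℕ → ℤ × ℤ) (i : ℕ) : ℤ × ℤ :=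
  (S31 (carriers31 Y i, Y i)).1

def twoSite (a b : ℤ × ℤ) (i : ℕ) : ℤ × ℤ :=
  if i = 0 then a else if i = 1 then b else (0, 0)

lemma config31_succ (Y0 : ℕ → ℤ × ℤ) (t : ℕ) :
    config31 Y0 (t + 1) = step31 (config31 Y0 t) :=
  rfl

@[simp]
lemma S31_vacuum : S31 ((1, 0), (0, 0)) = ((0, 0), (1, 0)) := by
  simp [S31]

lemma twoSite_of_two_le (a b : ℤ × ℤ) {j : ℕ} (hj : 2 ≤ j) : twoSite a b j = (0, 0) := by
  simp [twoSite, show j ≠ 0 by omega, show j ≠ 1 by omega]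

lemma carriers31_eq_vacuum_of_le {Y : ℕ → ℤ × ℤ} {k : ℕ} (hY : ∀ j, k ≤ j → Y j = (0, 0))
    (hk : carriers31 Y k = (1, 0)) {i : ℕ} (hi : k ≤ i) : carriers31 Y i = (1, 0) := by
  induction i, hi using Nat.le_induction with
  | base => exact hk
  | succ i hi ih => simp [carriers31, ih, hY i hi]

lemma step31_eq_vacuum_of_le {Y : ℕ → ℤ × ℤ} {k : ℕ} (hY : ∀ j, k ≤ j → Y j = (0, 0))
    (hk : carriers31 Y k = (1, 0)) {i : ℕ} (hi : k ≤ i) : step31 Y i = (0, 0) := by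
  simp [step31, carriers31_eq_vacuum_of_le hY hk hi, hY i hi]

lemma step31_twoSite {a b : ℤ × ℤ} (h2 : carriers31 (twoSite a b) 2 = (1, 0)) :
    step31 (twoSite a b) = twoSite (step31 (twoSite a b) 0) (step31 (twoSite a b) 1) := by
  funext i
  rcases i with _ | _ | i
  · rfl
  · rfl
  · rw [twoSite_of_two_le _ _ (by omega),
      step31_eq_vacuum_of_le (fun j hj => twoSite_of_two_le a b hj) h2 (by omega)]

lemma carriers31_twoSite_travel {a b : ℤ} (ha : 1 ≤ a) (hb : 0 ≤ b) :
    carriers31 (twoSite (a, 1) (b, 0)) 2 = (1, 0) := by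
  simp [carriers31, S31, twoSite, min_eq_left ha, min_eq_left hb]

lemma step31_twoSite_travel {a b : ℤ} (ha : 1 ≤ a) (hb : 0 ≤ b) :
    step31 (twoSite (a, 1) (b, 0)) = twoSite (a - 1, 1) (b + 1, 0) := by
  rw [step31_twoSite (carriers31_twoSite_travel ha hb)]
  simp [step31, carriers31, S31, twoSite, min_eq_left ha, min_eq_left hb, add_comm]

lemma carriers31_twoSite_release {b : ℤ} (hb : 1 ≤ b) :
    carriers31 (twoSite (0, 1) (b, 0)) 2 = (1, 0) := by
  simp [carriers31, S31, twoSite, min_eq_left hb]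

lemma step31_twoSite_release {b : ℤ} (hb : 1 ≤ b) :
    step31 (twoSite (0, 1) (b, 0)) = twoSite (0, 0) (b, 1) := by
  rw [step31_twoSite (carriers31_twoSite_release hb)]
  simp [step31, carriers31, S31, twoSite, min_eq_left hb]

lemma config31_twoSite_of_le {m : ℕ} {Y0 : ℕ → ℤ × ℤ} (hY0 : Y0 = twoSite ((m : ℤ), 1) (0, 0))
    {t : ℕ} (ht : t ≤ m) : config31 Y0 t = twoSite ((m : ℤ) - t, 1) ((t : ℤ), 0) := by
  induction t with
  | zero =>
    rw [Nat.cast_zero, sub_zero]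
    exact hY0
  | succ t ih =>
    rw [config31_succ, ih (by omega), step31_twoSite_travel (by omega) (by omega)]
    push_cast
    ring_nf

/-- `(m,1)` is a one-soliton of `Φ(3,1)` of minimal length one with velocity
`1/(m+1)`: starting from `Y⁰₀ = (m,1)` and vacuum elsewhere, at times `t ≤ m` the
configuration is `(m−t,1)` at site `0` and `(t,0)` at site `1`, at time `m+1` it is
`(m,1)` at site `1`, and at each of these time steps the carriers equal `(1,0)`
from the site `3` on. -/
theorem stmt_19 (m : ℕ) (hm : 1 ≤ m)
    (Y0 : ℕ → ℤ × ℤ)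
    (hY0 : Y0 = fun i => if i = 0 then ((m : ℤ), 1) else (0, 0)) :
    (∀ t : ℕ, t ≤ m → ∀ i : ℕ,
      config31 Y0 t i =
        if i = 0 then ((m : ℤ) - (t : ℤ), 1)
        else if i = 1 then ((t : ℤ), 0) else (0, 0)) ∧
    (∀ i : ℕ, config31 Y0 (m + 1) i = if i = 1 then ((m : ℤ), 1) else (0, 0)) ∧
    (∀ t : ℕ, t ≤ m → ∀ i : ℕ, 3 ≤ i → carriers31 (config31 Y0 t) i = (1, 0)) := by
  have hY0' : Y0 = twoSite ((m : ℤ), 1) (0, 0) := by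
    funext i
    simp [hY0, twoSite]
  have hconfig := fun t (ht : t ≤ m) => config31_twoSite_of_le hY0' ht
  have hm' : (1 : ℤ) ≤ m := by exact_mod_cast hm
  refine ⟨fun t ht i => congrFun (hconfig t ht) i, fun i => ?_, fun t ht i hi => ?_⟩
  · rw [config31_succ, hconfig m le_rfl, sub_self, step31_twoSite_release hm']
    rcases i with _ | _ | i <;> simp [twoSite]
  · have h2 : carriers31 (config31 Y0 t) 2 = (1, 0) := by
      rw [hconfig t ht]
      rcases Nat.lt_or_ge t m with hlt | hge
      · exact carriers31_twoSite_travel (by omega) (by omega)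
      · rw [show t = m by omega, sub_self]
        exact carriers31_twoSite_release hm'
    exact carriers31_eq_vacuum_of_le
      (by rw [hconfig t ht]; exact fun j hj => twoSite_of_two_le _ _ hj) h2 (by omega)
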